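/- In a 3D grid graph R(m,n,o), there is a cycle of length k (i.e., with exactly k vertices) if and only if at least two of m, n, o are greater than 1, k is even, and 4 ≤ k ≤ m·n·o. -/

import Mathlib

/-!
Every edge of the 3D grid changes `x + y + z` by `±1`, so cycles have even length; a vertex of a
cycle has two distinct neighbours on it, which fails at the vertex maximising `x + y + z` when the
box is a line; and a cycle has at most `m n o` vertices.

Conversely, for `M, N ≥ 2` the rectangle `R(M, N)` contains a cycle of every even length between
`4` and `M N`: a comb of full teeth, one shorter tooth and a zigzag through the next column. The
boustrophedon enumeration of `R(n, o)`, a right inverse of `foldMap n`, embeds `R(m, n o)` in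
`R(m, n, o)` as a subgraph and carries these cycles into the box.
-/

/-- Adjacency in the infinite 2D integer grid graph `G∞`:
two lattice points are adjacent iff they are at (Euclidean) distance 1. -/
def GridAdj (u v : ℤ × ℤ) : Prop :=
  (u.1 - v.1).natAbs + (u.2 - v.2).natAbs = 1

/-- The infinite grid graph `G∞` as a simple graph on `ℤ × ℤ`. -/
def GridGraph : SimpleGraph (ℤ × ℤ) where
  Adj u v := GridAdj u v
  symm := ⟨by intro u v h; simp only [GridAdj] at *; omega⟩
  loopless := ⟨by intro u h; simp only [GridAdj] at h; omega⟩

/-- A grid graph with vertex set `V` is solid if the subgraph of `G∞`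
induced by the complement of `V` is connected. -/
def Solid (V : Set (ℤ × ℤ)) : Prop :=
  (GridGraph.induce Vᶜ).Connected

/-- Vertex set of the rectangular grid graph `R(m,n)`. -/
def RectV (m n : ℤ) : Set (ℤ × ℤ) :=
  {v | 1 ≤ v.1 ∧ v.1 ≤ m ∧ 1 ≤ v.2 ∧ v.2 ≤ n}

/-- `l` is a path from `s` to `t` in the grid graph induced by the vertex set `V`,
recorded as the list of its vertices. -/
def IsGridPath (V : Set (ℤ × ℤ)) (l : List (ℤ × ℤ)) (s t : ℤ × ℤ) : Prop :=
  l ≠ [] ∧ (∀ v ∈ l, v ∈ V) ∧ l.Nodup ∧ l.Chain' GridAdj ∧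
    l.head? = some s ∧ l.getLast? = some t

/-- `l` is a cycle in the grid graph induced by the vertex set `V`, recorded as the
list of its (distinct) vertices; consecutive vertices, and the last and first
vertices, are adjacent.  Its length (number of vertices) is `l.length`. -/
def IsGridCycle (V : Set (ℤ × ℤ)) (l : List (ℤ × ℤ)) : Prop :=
  3 ≤ l.length ∧ (∀ v ∈ l, v ∈ V) ∧ l.Nodup ∧ (l ++ l.take 1).Chain' GridAdj

/-- The sequence of unit steps of a path (as a list of vertices). -/
def pathSteps (l : List (ℤ × ℤ)) : List (ℤ × ℤ) :=
  (l.zip l.tail).map fun p => p.2 - p.1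

/-- A path is monotone if it contains no two steps in opposite directions. -/
def MonotonePath (l : List (ℤ × ℤ)) : Prop :=
  ∀ d₁ ∈ pathSteps l, ∀ d₂ ∈ pathSteps l, d₁ ≠ -d₂

/-- The first and the last step of the (sub)path `c` point in opposite directions. -/
def OppEnds (c : List (ℤ × ℤ)) : Prop :=
  3 ≤ c.length ∧
    c.getD 1 (0, 0) - c.getD 0 (0, 0) =
      c.getD (c.length - 2) (0, 0) - c.getD (c.length - 1) (0, 0)

/-- A cave: a (contiguous) subpath whose first and last steps point in opposite
directions, which is minimal with this property. -/
def IsCave (c : List (ℤ × ℤ)) : Prop :=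
  OppEnds c ∧ ∀ c', c' <:+: c → c'.length < c.length → ¬ OppEnds c'

/-- The first endpoint `p` of a cave. -/
def caveStart (c : List (ℤ × ℤ)) : ℤ × ℤ := c.getD 0 (0, 0)

/-- The second endpoint `q` of a cave. -/
def caveEnd (c : List (ℤ × ℤ)) : ℤ × ℤ := c.getD (c.length - 1) (0, 0)

/-- `v` is a lattice point strictly between `p` and `q` on the straight axis-parallel
segment from `p` to `q` (the "vertices inside" a cave with endpoints `p`, `q`). -/
def Between (p q v : ℤ × ℤ) : Prop :=
  (p.1 = q.1 ∧ v.1 = p.1 ∧ min p.2 q.2 < v.2 ∧ v.2 < max p.2 q.2) ∨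
  (p.2 = q.2 ∧ v.2 = p.2 ∧ min p.1 q.1 < v.1 ∧ v.1 < max p.1 q.1)

/-- `v` is a lattice point on the closed straight segment from `p` to `q`. -/
def OnSeg (p q v : ℤ × ℤ) : Prop := v = p ∨ v = q ∨ Between p q v

/-- The (directed) edges of a cycle given by its vertex list `l`,
including the closing edge from the last vertex back to the first. -/
def cycEdges (l : List (ℤ × ℤ)) : List ((ℤ × ℤ) × (ℤ × ℤ)) :=
  (l ++ l.take 1).zip (l ++ l.take 1).tail

/-- The (undirected) edge `{a, b}` occurs on the cycle `l`. -/
def CycEdgeMem (l : List (ℤ × ℤ)) (a b : ℤ × ℤ) : Prop :=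
  (a, b) ∈ cycEdges l ∨ (b, a) ∈ cycEdges l

/-- The (directed) edges of a path given by its vertex list `l`. -/
def pathEdges (l : List (ℤ × ℤ)) : List ((ℤ × ℤ) × (ℤ × ℤ)) := l.zip l.tail

/-- The (undirected) edge `{a, b}` occurs on the path `l`. -/
def PathEdgeMem (l : List (ℤ × ℤ)) (a b : ℤ × ℤ) : Prop :=
  (a, b) ∈ pathEdges l ∨ (b, a) ∈ pathEdges l

/-- Number of vertical edges of the cycle `l` crossed by the rightward horizontal ray
starting at the point `(a, b + 1/2)`: vertical edges joining `(x,b)` and `(x,b+1)`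
with `x > a`.  Used for the even–odd ("inside") test. -/
def vertCross (l : List (ℤ × ℤ)) (a b : ℤ) : ℕ :=
  (cycEdges l).countP fun e =>
    decide (e.1.1 = e.2.1 ∧ a < e.1.1 ∧
      ((e.1.2 = b ∧ e.2.2 = b + 1) ∨ (e.1.2 = b + 1 ∧ e.2.2 = b)))

/-- Number of horizontal edges of the cycle `l` crossed by the upward vertical ray
starting at the point `(a + 1/2, b)`: horizontal edges joining `(a,y)` and `(a+1,y)`
with `y > b`. -/
def horizCross (l : List (ℤ × ℤ)) (a b : ℤ) : ℕ :=
  (cycEdges l).countP fun e =>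
    decide (e.1.2 = e.2.2 ∧ b < e.1.2 ∧
      ((e.1.1 = a ∧ e.2.1 = a + 1) ∨ (e.1.1 = a + 1 ∧ e.2.1 = a)))

/-- The lattice point `v` lies in the closed bounded region determined by the cycle `l`
(regarded as a simple closed curve): either on the curve, or inside it by the
even–odd rule. -/
def InClosedRegion (l : List (ℤ × ℤ)) (v : ℤ × ℤ) : Prop :=
  v ∈ l ∨ Odd (vertCross l v.1 v.2)

/-- The unit grid edge `{u, v}` lies in the closed bounded region determined by the
cycle `l`: either it is an edge of the cycle, or its midpoint is inside the cycle by
the even–odd rule. -/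
def EdgeInClosedRegion (l : List (ℤ × ℤ)) (u v : ℤ × ℤ) : Prop :=
  CycEdgeMem l u v ∨
    (u.1 = v.1 ∧ Odd (vertCross l u.1 (min u.2 v.2))) ∨
    (u.2 = v.2 ∧ Odd (horizCross l (min u.1 v.1) u.2))

/-- The cave `c` of the cycle `l` is convex: the vertices and edges inside it
(i.e. on the straight segment between its endpoints) lie in the closed bounded
region determined by `l`. -/
def ConvexCave (l c : List (ℤ × ℤ)) : Prop :=
  (∀ v, Between (caveStart c) (caveEnd c) v → InClosedRegion l v) ∧
  (∀ u v, OnSeg (caveStart c) (caveEnd c) u → OnSeg (caveStart c) (caveEnd c) v →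
    GridAdj u v → EdgeInClosedRegion l u v)

/-- `c` is a cave of the cycle `l`: a cave that occurs as a contiguous subpath of the
cyclic vertex sequence of `l` (i.e. as a prefix of some rotation of `l`). -/
def CaveOfCycle (l c : List (ℤ × ℤ)) : Prop :=
  IsCave c ∧ ∃ i, c <+: l.rotate i

/-- The cave `c` is contractible with respect to the path/cycle `l`:
no vertex inside the cave belongs to `l`. -/
def ContractibleCaveOf (l c : List (ℤ × ℤ)) : Prop :=
  ∀ v, Between (caveStart c) (caveEnd c) v → v ∉ l

/-- The straight axis-parallel segment from `p` to `q`, as the list of its lattice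
points from `p` to `q` (the shortest path between `p` and `q` on their common line). -/
def segList (p q : ℤ × ℤ) : List (ℤ × ℤ) :=
  if p.1 = q.1 then
    (List.range ((q.2 - p.2).natAbs + 1)).map fun i =>
      (p.1, p.2 + (if p.2 ≤ q.2 then (i : ℤ) else -(i : ℤ)))
  else
    (List.range ((q.1 - p.1).natAbs + 1)).map fun i =>
      (p.1 + (if p.1 ≤ q.1 then (i : ℤ) else -(i : ℤ)), p.2)

/-- Adjacency in the infinite 3D integer grid: distance 1. -/
def Grid3Adj (u v : ℤ × ℤ × ℤ) : Prop :=
  (u.1 - v.1).natAbs + (u.2.1 - v.2.1).natAbs + (u.2.2 - v.2.2).natAbs = 1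

/-- Vertex set of the 3D grid graph `R(m,n,o)`. -/
def Rect3V (m n o : ℤ) : Set (ℤ × ℤ × ℤ) :=
  {v | 1 ≤ v.1 ∧ v.1 ≤ m ∧ 1 ≤ v.2.1 ∧ v.2.1 ≤ n ∧ 1 ≤ v.2.2 ∧ v.2.2 ≤ o}

/-- `l` is a path from `s` to `t` in the 3D grid graph induced by `V`. -/
def IsGrid3Path (V : Set (ℤ × ℤ × ℤ)) (l : List (ℤ × ℤ × ℤ)) (s t : ℤ × ℤ × ℤ) : Prop :=
  l ≠ [] ∧ (∀ v ∈ l, v ∈ V) ∧ l.Nodup ∧ l.Chain' Grid3Adj ∧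
    l.head? = some s ∧ l.getLast? = some t

/-- `l` is a cycle in the 3D grid graph induced by `V`. -/
def IsGrid3Cycle (V : Set (ℤ × ℤ × ℤ)) (l : List (ℤ × ℤ × ℤ)) : Prop :=
  3 ≤ l.length ∧ (∀ v ∈ l, v ∈ V) ∧ l.Nodup ∧ (l ++ l.take 1).Chain' Grid3Adj

/-- The folding map `F` from the 3D grid `R(m,n,o)` to the rectangular grid `R(m,no)`:
`F(v) = (x(v), n(z(v)-1) + y(v))` if `z(v)` is odd, and
`F(v) = (x(v), n·z(v) - y(v) + 1)` if `z(v)` is even. -/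
def foldMap (n : ℤ) (v : ℤ × ℤ × ℤ) : ℤ × ℤ :=
  if Odd v.2.2 then (v.1, n * (v.2.2 - 1) + v.2.1) else (v.1, n * v.2.2 - v.2.1 + 1)

@[simp] theorem mem_rectV {m n : ℤ} {v : ℤ × ℤ} :
    v ∈ RectV m n ↔ 1 ≤ v.1 ∧ v.1 ≤ m ∧ 1 ≤ v.2 ∧ v.2 ≤ n := Iff.rfl

@[simp] theorem mem_rect3V {m n o : ℤ} {v : ℤ × ℤ × ℤ} :
    v ∈ Rect3V m n o ↔ 1 ≤ v.1 ∧ v.1 ≤ m ∧ 1 ≤ v.2.1 ∧ v.2.1 ≤ n ∧ 1 ≤ v.2.2 ∧ v.2.2 ≤ o :=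
  Iff.rfl

section ListCycle

variable {α β : Type*} {R : α → α → Prop} {S : β → β → Prop} {V : Set α} {l : List α}

/-- `IsGridCycle` and `IsGrid3Cycle` are this predicate for `GridAdj` and `Grid3Adj`. -/
def IsListCycle (R : α → α → Prop) (V : Set α) (l : List α) : Prop :=
  3 ≤ l.length ∧ (∀ v ∈ l, v ∈ V) ∧ l.Nodup ∧ (l ++ l.take 1).IsChain R

theorem isChain_append_take_one_iff_cycle_chain :
    (l ++ l.take 1).IsChain R ↔ Cycle.Chain R (l : Cycle α) := by
  cases l <;> simp

theorem IsListCycle.map {W : Set β} (f : α → β) (hl : IsListCycle R V l) (hf : Set.InjOn f V)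
    (hR : ∀ a b, R a b → S (f a) (f b)) (hV : Set.MapsTo f V W) :
    IsListCycle S W (l.map f) := by
  obtain ⟨h3, hV', hnd, hch⟩ := hl
  refine ⟨by simpa using h3, fun v hv => ?_, hnd.map_on fun a ha b hb => hf (hV' a ha) (hV' b hb),
    ?_⟩
  · obtain ⟨u, hu, rfl⟩ := List.mem_map.1 hv
    exact hV (hV' u hu)
  · rw [← List.map_take, ← List.map_append, List.isChain_map]
    exact hch.imp hR

theorem IsListCycle.exists_adj_ne (hl : IsListCycle R V l) {v : α} (hv : v ∈ l) :
    ∃ u ∈ l, ∃ w ∈ l, u ≠ w ∧ R u v ∧ R v w := by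
  obtain ⟨h3, -, hnd, hch⟩ := hl
  obtain ⟨s, t, rfl⟩ := List.mem_iff_append.1 hv
  have hrot : (s ++ v :: t : Cycle α) = (v :: (t ++ s) : List α) := by
    rw [Cycle.coe_eq_coe]
    simpa using (List.isRotated_append (l := s) (l' := v :: t))
  rw [isChain_append_take_one_iff_cycle_chain, hrot, Cycle.chain_coe_cons] at hch
  have hnd' : (v :: (t ++ s)).Nodup :=
    (List.perm_middle.trans (List.perm_append_comm.cons v)).nodup_iff.1 hnd
  have hmem : ∀ x ∈ t ++ s, x ∈ s ++ v :: t := fun x hx => by simp at hx ⊢; tauto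
  have hlen : 2 ≤ (t ++ s).length := by simp at h3 ⊢; omega
  obtain ⟨a, w, hw⟩ :=
    List.exists_cons_of_ne_nil (List.ne_nil_of_length_pos (l := t ++ s) (by omega))
  rw [hw] at hch hnd' hmem hlen
  have hw0 : w ≠ [] := List.ne_nil_of_length_pos (by simp at hlen; omega)
  refine ⟨w.getLast hw0, hmem _ (by simp [List.getLast_mem]), a, hmem _ (by simp), ?_, ?_, ?_⟩
  · exact fun h => (List.nodup_cons.1 (List.nodup_cons.1 hnd').2).1 (h ▸ List.getLast_mem hw0)
  · have := (List.isChain_append (l₁ := v :: a :: w) (l₂ := [v])).1 (by simpa using hch)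
    exact this.2.2 _ (by simp [List.getLast?_cons, List.getLast?_eq_some_getLast hw0]) _ rfl
  · exact (List.isChain_cons_cons.1 hch).1

theorem getLast_eq_add_length_nsmul {G : Type*} [AddMonoid G] (f : α → G) (g : G)
    (hf : ∀ a b, R a b → f b = f a + g) {a : α} {l : List α} (hl : (a :: l).IsChain R) :
    f ((a :: l).getLast (List.cons_ne_nil a l)) = f a + l.length • g := by
  induction l generalizing a with
  | nil => simp
  | cons b l ih =>
    obtain ⟨hab, hl⟩ := List.isChain_cons_cons.1 hl
    rw [List.getLast_cons (List.cons_ne_nil b l), ih hl, hf a b hab, List.length_cons,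
      succ_nsmul', add_assoc]

theorem even_length_of_isChain_append_take_one (g : α → ℤ)
    (hg : ∀ a b, R a b → g b = g a + 1 ∨ g a = g b + 1) (hl : (l ++ l.take 1).IsChain R) :
    Even l.length := by
  cases l with
  | nil => simp
  | cons a t =>
    have h := getLast_eq_add_length_nsmul (fun v => (g v : ZMod 2)) 1 (fun a b hab => ?_)
      (l := t ++ [a]) (by simpa using hl)
    · simpa [← ZMod.natCast_eq_zero_iff_even] using h
    · rcases hg a b hab with h | h
      · simp [h]
      · simp only [h, Int.cast_add, Int.cast_one, add_assoc, one_add_one_eq_two]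
        rw [show (2 : ZMod 2) = 0 from rfl, add_zero]

theorem not_isListCycle_of_injOn (g : α → ℤ) (hg : ∀ a b, R a b → g b = g a + 1 ∨ g a = g b + 1)
    (hinj : Set.InjOn g V) : ¬ IsListCycle R V l := by
  classical
  intro hl
  have hne : l.toFinset.Nonempty := by
    obtain ⟨h3, -⟩ := hl
    exact List.toFinset_nonempty_iff _ |>.2 (List.ne_nil_of_length_pos (by omega))
  obtain ⟨v, hv, hmax⟩ := l.toFinset.exists_max_image g hne
  rw [List.mem_toFinset] at hv
  obtain ⟨u, hu, w, hw, hne, huv, hvw⟩ := hl.exists_adj_ne hv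
  have := hmax u (List.mem_toFinset.2 hu)
  have := hmax w (List.mem_toFinset.2 hw)
  have := hg _ _ huv
  have := hg _ _ hvw
  exact hne (hinj (hl.2.1 u hu) (hl.2.1 w hw) (by omega))

end ListCycle

section Walk

variable {α : Type*} {R : α → α → Prop}

def IsChainFromTo (R : α → α → Prop) (a : α) (l : List α) (b : α) : Prop :=
  (a :: l).IsChain R ∧ (a :: l).getLast (List.cons_ne_nil a l) = b

theorem IsChainFromTo.cons {a x b : α} {l : List α} (h : R a x) (hl : IsChainFromTo R x l b) :
    IsChainFromTo R a (x :: l) b :=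
  ⟨List.isChain_cons_cons.2 ⟨h, hl.1⟩, by rw [List.getLast_cons (List.cons_ne_nil _ _)]; exact hl.2⟩

theorem IsChainFromTo.append {a b c : α} {l₁ l₂ : List α} (h₁ : IsChainFromTo R a l₁ b)
    (h₂ : IsChainFromTo R b l₂ c) : IsChainFromTo R a (l₁ ++ l₂) c := by
  induction l₁ generalizing a with
  | nil =>
    obtain ⟨-, rfl⟩ := h₁
    exact h₂
  | cons x l ih =>
    obtain ⟨hc, hl⟩ := h₁
    rw [List.isChain_cons_cons] at hc
    exact .cons hc.1 (ih ⟨hc.2, by rwa [List.getLast_cons (List.cons_ne_nil _ _)] at hl⟩)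

theorem IsChainFromTo.of_isChain {p x y : α} {l : List α} (hl : l.IsChain R)
    (hx : l.head? = some x) (hy : l.getLast? = some y) (hp : R p x) : IsChainFromTo R p l y := by
  cases l with
  | nil => simp at hx
  | cons z t =>
    obtain rfl : z = x := by simpa using hx
    exact ⟨List.isChain_cons_cons.2 ⟨hp, hl⟩, by
      rw [List.getLast_cons (List.cons_ne_nil _ _)]; simpa [List.getLast?_eq_some_getLast] using hy⟩

theorem IsChainFromTo.isChain_append_take_one {a : α} {l : List α} (h : IsChainFromTo R a l a)
    (hl : l ≠ []) : (l ++ l.take 1).IsChain R := by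
  obtain ⟨x, t, rfl⟩ := List.exists_cons_of_ne_nil hl
  obtain ⟨hc, hlast⟩ := h
  rw [List.isChain_cons_cons] at hc
  rw [List.getLast_cons (List.cons_ne_nil _ _)] at hlast
  refine List.isChain_append.2 ⟨hc.2, by simp, fun y hy z hz => ?_⟩
  simp only [List.getLast?_eq_some_getLast (List.cons_ne_nil x t), hlast, Option.mem_def,
    Option.some.injEq, List.take_succ_cons, List.take_zero, List.head?_cons] at hy hz
  exact hy ▸ hz ▸ hc.1

theorem isChain_map_intRange (f : ℤ → α) (hf : ∀ i, R (f i) (f (i + 1))) (a b : ℤ) :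
    ((Int.range a b).map f).IsChain R := by
  rw [Int.range, List.map_map, List.isChain_map, List.isChain_range]
  intro m _
  simpa [add_assoc] using hf (a + m)

theorem head?_map_intRange (f : ℤ → α) {a b : ℤ} (hab : a < b) :
    ((Int.range a b).map f).head? = some (f a) := by
  simp [Int.range, List.head?_range, show (b - a).toNat ≠ 0 by omega]

theorem getLast?_map_intRange (f : ℤ → α) {a b : ℤ} (hab : a < b) :
    ((Int.range a b).map f).getLast? = some (f (b - 1)) := by
  simp [Int.range, List.getLast?_range, show (b - a).toNat ≠ 0 by omega]
  congr 1
  omega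

theorem isChainFromTo_map_intRange (f : ℤ → α) (hf : ∀ i, R (f i) (f (i + 1))) {p : α} {a b : ℤ}
    (hab : a ≤ b) (hp : R p (f a)) : IsChainFromTo R p ((Int.range a (b + 1)).map f) (f b) :=
  .of_isChain (isChain_map_intRange f hf _ _) (head?_map_intRange f (by omega))
    (by simpa using getLast?_map_intRange f (b := b + 1) (by omega)) hp

theorem isChainFromTo_reverse_map_intRange (f : ℤ → α) (hf : ∀ i, R (f (i + 1)) (f i)) {p : α}
    {a b : ℤ} (hab : a ≤ b) (hp : R p (f b)) :
    IsChainFromTo R p ((Int.range a (b + 1)).map f).reverse (f a) :=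
  .of_isChain (List.isChain_reverse.2 (isChain_map_intRange f hf _ _))
    (by simpa using getLast?_map_intRange f (b := b + 1) (by omega))
    (by simpa using head?_map_intRange f (b := b + 1) (by omega)) hp

end Walk

def colSeg (x a b : ℤ) : List (ℤ × ℤ) := (Int.range a (b + 1)).map (Prod.mk x)

def rowSeg (y a b : ℤ) : List (ℤ × ℤ) := (Int.range a (b + 1)).map (·, y)

@[simp] theorem mem_colSeg {x a b : ℤ} {v : ℤ × ℤ} :
    v ∈ colSeg x a b ↔ v.1 = x ∧ a ≤ v.2 ∧ v.2 ≤ b := by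
  obtain ⟨v₁, v₂⟩ := v
  simp [colSeg, Int.mem_range_iff, eq_comm, and_comm]

@[simp] theorem mem_rowSeg {y a b : ℤ} {v : ℤ × ℤ} :
    v ∈ rowSeg y a b ↔ v.2 = y ∧ a ≤ v.1 ∧ v.1 ≤ b := by
  obtain ⟨v₁, v₂⟩ := v
  simp [rowSeg, Int.mem_range_iff, eq_comm, and_comm]

theorem nodup_colSeg (x a b : ℤ) : (colSeg x a b).Nodup := by
  rw [colSeg, Int.range, List.map_map]
  exact List.nodup_range.map fun i j h => by simpa using h

theorem nodup_rowSeg (y a b : ℤ) : (rowSeg y a b).Nodup := by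
  rw [rowSeg, Int.range, List.map_map]
  exact List.nodup_range.map fun i j h => by simpa using h

@[simp] theorem length_colSeg (x a b : ℤ) : (colSeg x a b).length = (b + 1 - a).toNat := by
  simp [colSeg, Int.range]

@[simp] theorem length_rowSeg (y a b : ℤ) : (rowSeg y a b).length = (b + 1 - a).toNat := by
  simp [rowSeg, Int.range]

theorem isChainFromTo_colSeg {p : ℤ × ℤ} {x a b : ℤ} (hab : a ≤ b) (hp : GridAdj p (x, a)) :
    IsChainFromTo GridAdj p (colSeg x a b) (x, b) :=
  isChainFromTo_map_intRange _ (fun _ => by simp [GridAdj]) hab hp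

theorem isChainFromTo_colSeg_reverse {p : ℤ × ℤ} {x a b : ℤ} (hab : a ≤ b) (hp : GridAdj p (x, b)) :
    IsChainFromTo GridAdj p (colSeg x a b).reverse (x, a) :=
  isChainFromTo_reverse_map_intRange _ (fun _ => by simp [GridAdj]) hab hp

theorem isChainFromTo_rowSeg_reverse {p : ℤ × ℤ} {y a b : ℤ} (hab : a ≤ b) (hp : GridAdj p (b, y)) :
    IsChainFromTo GridAdj p (rowSeg y a b).reverse (a, y) :=
  isChainFromTo_reverse_map_intRange (fun i => (i, y)) (fun _ => by simp [GridAdj]) hab hp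

def teeth (N x : ℤ) : ℕ → ℤ → List (ℤ × ℤ)
  | 0, h => colSeg x 2 h
  | q + 1, h => colSeg x 2 N ++ (colSeg (x + 1) 2 N).reverse ++ teeth N (x + 2) q h

theorem isChainFromTo_teeth {N x h : ℤ} {q : ℕ} {p : ℤ × ℤ} (hN : 2 ≤ N) (hh : 2 ≤ h)
    (hp : GridAdj p (x, 2)) : IsChainFromTo GridAdj p (teeth N x q h) (x + 2 * q, h) := by
  induction q generalizing x p with
  | zero => simpa [teeth] using isChainFromTo_colSeg hh hp
  | succ q ih =>
    have h₁ := (isChainFromTo_colSeg hN hp).append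
      (isChainFromTo_colSeg_reverse (x := x + 1) hN (by simp [GridAdj]))
    have h₂ := h₁.append (ih (x := x + 2) (p := (x + 1, 2)) (by simp [GridAdj]))
    rwa [show x + 2 * ((q + 1 : ℕ) : ℤ) = x + 2 + 2 * q by push_cast; ring]

theorem mem_teeth {N x h : ℤ} {q : ℕ} {v : ℤ × ℤ} (hv : v ∈ teeth N x q h) :
    x ≤ v.1 ∧ v.1 ≤ x + 2 * q ∧ 2 ≤ v.2 ∧ v.2 ≤ max N h := by
  induction q generalizing x with
  | zero => simp [teeth] at hv; omega
  | succ q ih =>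
    simp only [teeth, List.mem_append, List.mem_reverse, mem_colSeg] at hv
    rcases hv with (hv | hv) | hv
    · push_cast; omega
    · push_cast; omega
    · have := ih hv; push_cast; omega

theorem nodup_teeth (N x h : ℤ) (q : ℕ) : (teeth N x q h).Nodup := by
  induction q generalizing x with
  | zero => exact nodup_colSeg _ _ _
  | succ q ih =>
    simp only [teeth, List.nodup_append, List.nodup_reverse, List.mem_reverse, mem_colSeg]
    refine ⟨⟨nodup_colSeg _ _ _, nodup_colSeg _ _ _, ?_⟩, ih _, ?_⟩
    · rintro a ha b hb rfl
      omega
    · rintro a ha b hb rfl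
      have := mem_teeth hb
      simp only [List.mem_append, List.mem_reverse, mem_colSeg] at ha
      omega

theorem length_teeth {N x h : ℤ} {q : ℕ} (hN : 2 ≤ N) (hh : 2 ≤ h) :
    ((teeth N x q h).length : ℤ) = 2 * q * (N - 1) + h - 1 := by
  induction q generalizing x with
  | zero => simp [teeth]; omega
  | succ q ih =>
    simp only [teeth, List.length_append, List.length_reverse, length_colSeg, Nat.cast_add, ih]
    push_cast
    rw [Int.toNat_of_nonneg (by omega)]
    ring

def zigzagColumn (c : ℤ) : ℤ → ℕ → List (ℤ × ℤ)
  | y, 0 => (colSeg c 1 y).reverse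
  | y, s + 1 => [(c, y), (c + 1, y), (c + 1, y - 1), (c, y - 1)] ++ zigzagColumn c (y - 2) s

theorem isChainFromTo_zigzagColumn {c y : ℤ} {s : ℕ} {p : ℤ × ℤ} (hs : 2 * s ≤ y) (hy : 1 ≤ y)
    (hp : GridAdj p (c, y)) : IsChainFromTo GridAdj p (zigzagColumn c y s) (c, 1) := by
  induction s generalizing y p with
  | zero => exact isChainFromTo_colSeg_reverse hy hp
  | succ s ih =>
    have hbump : IsChainFromTo GridAdj p [(c, y), (c + 1, y), (c + 1, y - 1), (c, y - 1)]
        (c, y - 1) :=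
      .cons hp <| .cons (by simp [GridAdj]) <| .cons (by simp [GridAdj]) <|
        .cons (by simp [GridAdj]) ⟨.singleton _, rfl⟩
    refine hbump.append ?_
    rcases (show y = 2 ∨ 3 ≤ y by push_cast at hs; omega) with rfl | hy3
    · obtain rfl : s = 0 := by push_cast at hs; omega
      simpa [zigzagColumn, colSeg, Int.range] using ⟨.singleton _, rfl⟩
    · exact ih (by push_cast at hs; omega) (by omega) (by simp [GridAdj])

theorem mem_zigzagColumn {c y : ℤ} {s : ℕ} {v : ℤ × ℤ} (hs : 2 * s ≤ y)
    (hv : v ∈ zigzagColumn c y s) :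
    1 ≤ v.2 ∧ v.2 ≤ y ∧ (v.1 = c ∨ v.1 = c + 1 ∧ y - 2 * s < v.2) := by
  induction s generalizing y with
  | zero => simp [zigzagColumn] at hv; omega
  | succ s ih =>
    simp only [zigzagColumn, List.cons_append, List.nil_append, List.mem_cons] at hv
    push_cast at hs ⊢
    rcases hv with rfl | rfl | rfl | rfl | hv
    iterate 4 omega
    have := ih (by omega) hv
    omega

theorem nodup_zigzagColumn {c y : ℤ} {s : ℕ} (hs : 2 * s ≤ y) : (zigzagColumn c y s).Nodup := by
  induction s generalizing y with
  | zero => exact List.nodup_reverse.2 (nodup_colSeg _ _ _)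
  | succ s ih =>
    push_cast at hs
    refine List.nodup_append.2 ⟨by simp [Prod.ext_iff]; omega, ih (by omega), ?_⟩
    rintro a ha b hb rfl
    have := mem_zigzagColumn (by omega) hb
    simp only [List.mem_cons, List.not_mem_nil, or_false] at ha
    rcases ha with rfl | rfl | rfl | rfl <;> omega

theorem length_zigzagColumn {c y : ℤ} {s : ℕ} (hs : 2 * s ≤ y) :
    ((zigzagColumn c y s).length : ℤ) = y + 2 * s := by
  induction s generalizing y with
  | zero => simp [zigzagColumn]; omega
  | succ s ih =>
    push_cast at hs
    simp only [zigzagColumn, List.length_append, List.length_cons, List.length_nil, Nat.cast_add,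
      ih (show 2 * (s : ℤ) ≤ y - 2 by omega)]
    push_cast
    ring

/-- Columns `1, …, 2q` carry `q` teeth of height `N` above row `1`, column `2q + 1` climbs from
row `2` to row `h`, column `2q + 2` comes back down to row `1` with `s` detours through column
`2q + 3`, and row `1` leads back to column `1`. -/
def comb (N : ℤ) (q : ℕ) (h : ℤ) (s : ℕ) : List (ℤ × ℤ) :=
  teeth N 1 q h ++ zigzagColumn (2 * q + 2) h s ++ (rowSeg 1 1 (2 * q + 1)).reverse

theorem length_comb {N h : ℤ} {q s : ℕ} (hN : 2 ≤ N) (hh : 2 ≤ h) (hs : 2 * s ≤ h) :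
    ((comb N q h s).length : ℤ) = 2 * q * N + 2 * h + 2 * s := by
  simp only [comb, List.length_append, List.length_reverse, length_rowSeg, Nat.cast_add,
    length_teeth hN hh, length_zigzagColumn hs]
  rw [Int.toNat_of_nonneg (by omega)]
  ring

theorem isGridCycle_comb {M N h : ℤ} {q s : ℕ} (hN : 2 ≤ N) (hh : 2 ≤ h) (hhN : h ≤ N)
    (hs : 2 * s ≤ h) (hM : 2 * q + 2 ≤ M) (hMs : s ≠ 0 → 2 * q + 3 ≤ M) :
    IsGridCycle (RectV M N) (comb N q h s) := by
  have hwalk : IsChainFromTo GridAdj (1, 1) (comb N q h s) (1, 1) :=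
    ((isChainFromTo_teeth hN hh (by simp [GridAdj])).append
      (isChainFromTo_zigzagColumn hs (by omega) (by simp only [GridAdj]; omega))).append
      (isChainFromTo_rowSeg_reverse (by omega) (by simp [GridAdj]))
  have hlen := length_comb (q := q) hN hh hs
  have : (0 : ℤ) ≤ 2 * q * N := by positivity
  refine ⟨by omega, fun v hv => ?_, ?_, hwalk.isChain_append_take_one ?_⟩
  · simp only [comb, List.mem_append, List.mem_reverse, mem_rowSeg] at hv
    simp only [mem_rectV]
    rcases hv with (hv | hv) | hv
    · have := mem_teeth hv; omega
    · have := mem_zigzagColumn hs hv; omega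
    · omega
  · simp only [comb, List.nodup_append, List.nodup_reverse, List.mem_append, List.mem_reverse,
      mem_rowSeg]
    refine ⟨⟨nodup_teeth _ _ _ _, nodup_zigzagColumn hs, ?_⟩, nodup_rowSeg _ _ _, ?_⟩
    · rintro a ha b hb rfl
      have := mem_teeth ha
      have := mem_zigzagColumn hs hb
      omega
    · rintro a ha b hb rfl
      rcases ha with ha | ha
      · have := mem_teeth ha; omega
      · have := mem_zigzagColumn hs ha; omega
  · rintro hnil
    simp [hnil] at hlen
    omega


theorem exists_comb_parameters {M N : ℤ} {K : ℕ} (hM : 2 ≤ M) (hN : 2 ≤ N) (hK : 2 ≤ K)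
    (hKMN : 2 * (K : ℤ) ≤ M * N) :
    ∃ (q s : ℕ) (h : ℤ), 2 ≤ h ∧ h ≤ N ∧ 2 * s ≤ h ∧ 2 * q + 2 ≤ M ∧
      (s ≠ 0 → 2 * q + 3 ≤ M) ∧ (K : ℤ) = q * N + h + s := by
  obtain ⟨q, r, hK, hrN⟩ : ∃ q r : ℕ, (K : ℤ) = q * N + r + 2 ∧ (r : ℤ) < N := by
    refine ⟨((K - 2) / N : ℤ).toNat, ((K - 2) % N : ℤ).toNat, ?_, ?_⟩
    · rw [Int.toNat_of_nonneg (Int.ediv_nonneg (by omega) (by omega)),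
        Int.toNat_of_nonneg (Int.emod_nonneg _ (by omega))]
      linarith [Int.mul_ediv_add_emod ((K : ℤ) - 2) N]
    · rw [Int.toNat_of_nonneg (Int.emod_nonneg _ (by omega))]
      exact Int.emod_lt_of_pos _ (by omega)
  rcases (show r + 2 ≤ N ∨ r + 1 = N by omega) with hr | hr
  · by_cases hq : 2 * q + 2 ≤ M
    · exact ⟨q, 0, r + 2, by omega, hr, by omega, hq, by simp, by push_cast; linarith⟩
    -- `M = 2q + 1` is odd: the last tooth has full height and the `r + 2` missing cells come
    -- from detours into column `M`.
    · have hqM : M = 2 * q + 1 := by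
        have : 2 * (q : ℤ) < M := by
          by_contra! h
          nlinarith
        omega
      subst hqM
      obtain ⟨q, rfl⟩ : ∃ q', q = q' + 1 := ⟨q - 1, by omega⟩
      refine ⟨q, r + 2, N, hN, le_rfl, ?_, by push_cast; omega, fun _ => by push_cast; omega, ?_⟩
      · push_cast
        nlinarith
      · push_cast at hK ⊢
        linarith
  · have : 2 * (q : ℤ) + 3 ≤ M := by
      by_contra! h
      nlinarith
    exact ⟨q, 1, N, hN, le_rfl, by omega, by omega, fun _ => this, by push_cast; linarith⟩

theorem exists_isGridCycle_rectV {M N : ℤ} {k : ℕ} (hM : 2 ≤ M) (hN : 2 ≤ N) (hk : Even k)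
    (hk4 : 4 ≤ k) (hkMN : (k : ℤ) ≤ M * N) :
    ∃ l, IsGridCycle (RectV M N) l ∧ l.length = k := by
  obtain ⟨K, rfl⟩ := hk
  obtain ⟨q, s, h, hh, hhN, hs, hqM, hsM, hK⟩ :=
    exists_comb_parameters (K := K) hM hN (by omega) (by push_cast at hkMN; linarith)
  refine ⟨comb N q h s, isGridCycle_comb hN hh hhN hs hqM hsM, ?_⟩
  have := length_comb (q := q) hN hh hs
  zify
  linarith

/-- Boustrophedon enumeration of the grid with `n` columns: `j = n q + r + 1` with `0 ≤ r < n`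
goes to row `q + 1`, traversed left to right for even `q` and right to left for odd `q`. -/
def snake (n j : ℤ) : ℤ × ℤ :=
  (if Even ((j - 1) / n) then (j - 1) % n + 1 else n - (j - 1) % n, (j - 1) / n + 1)

theorem snake_mul_add_add_one {n q r : ℤ} (hr0 : 0 ≤ r) (hrn : r < n) :
    snake n (n * q + r + 1) = (if Even q then r + 1 else n - r, q + 1) := by
  obtain ⟨hq, hr⟩ := (Int.ediv_emod_unique (a := n * q + r + 1 - 1) (q := q) (r := r) (by omega)).2
    ⟨by ring, hr0, hrn⟩
  simp only [snake, hq, hr]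

theorem exists_eq_mul_add_add_one {n : ℤ} (hn : 0 < n) (j : ℤ) :
    ∃ q r, 0 ≤ r ∧ r < n ∧ j = n * q + r + 1 :=
  ⟨(j - 1) / n, (j - 1) % n, Int.emod_nonneg _ hn.ne', Int.emod_lt_of_pos _ hn,
    by linarith [Int.mul_ediv_add_emod (j - 1) n]⟩

theorem gridAdj_snake {n : ℤ} (hn : 0 < n) (j : ℤ) : GridAdj (snake n j) (snake n (j + 1)) := by
  obtain ⟨q, r, hr0, hrn, rfl⟩ := exists_eq_mul_add_add_one hn j
  rcases (show r + 1 < n ∨ r + 1 = n by omega) with hr | rfl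
  · rw [show n * q + r + 1 + 1 = n * q + (r + 1) + 1 by ring, snake_mul_add_add_one hr0 hrn,
      snake_mul_add_add_one (by omega) hr]
    split_ifs <;> simp only [GridAdj] <;> omega
  -- `j` ends its row, and the next row starts in the same column
  · rw [show (r + 1) * q + r + 1 + 1 = (r + 1) * (q + 1) + 0 + 1 by ring,
      snake_mul_add_add_one hr0 hrn, snake_mul_add_add_one le_rfl hn]
    rcases Int.even_or_odd q with hq | hq
    · simp [hq, Int.not_odd_iff_even.2 hq, GridAdj, parity_simps]
    · simp [hq, Int.not_even_iff_odd.2 hq, GridAdj, parity_simps]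

theorem foldMap_snake {n : ℤ} (hn : 0 < n) (x j : ℤ) : foldMap n (x, snake n j) = (x, j) := by
  obtain ⟨q, r, hr0, hrn, rfl⟩ := exists_eq_mul_add_add_one hn j
  rw [snake_mul_add_add_one hr0 hrn]
  by_cases hq : Even q <;> simp [foldMap, hq, parity_simps] <;> ring

theorem snake_mem_rectV {n o j : ℤ} (hn : 0 < n) (hj : 1 ≤ j) (hjo : j ≤ n * o) :
    snake n j ∈ RectV n o := by
  obtain ⟨q, r, hr0, hrn, rfl⟩ := exists_eq_mul_add_add_one hn j
  have hq0 : 0 ≤ q := by nlinarith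
  have hqo : q < o := by nlinarith
  rw [snake_mul_add_add_one hr0 hrn]
  split_ifs <;> simp only [mem_rectV] <;> omega


theorem isGrid3Cycle_map_snake {m n o : ℤ} (hn : 0 < n) {l : List (ℤ × ℤ)}
    (hl : IsGridCycle (RectV m (n * o)) l) :
    IsGrid3Cycle (Rect3V m n o) (l.map fun p => (p.1, snake n p.2)) := by
  refine IsListCycle.map (R := GridAdj) (V := RectV m (n * o)) _ hl ?_ ?_ ?_
  · intro p _ p' _ h
    have := congrArg (foldMap n) h
    rwa [foldMap_snake hn, foldMap_snake hn] at this
  · rintro ⟨x, j⟩ ⟨x', j'⟩ h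
    simp only [GridAdj] at h
    obtain ⟨i, hi⟩ : ∃ i, j = j' ∨ x = x' ∧ (j = i ∧ j' = i + 1 ∨ j = i + 1 ∧ j' = i) :=
      ⟨min j j', by omega⟩
    have := gridAdj_snake hn i
    rcases hi with rfl | ⟨rfl, ⟨rfl, rfl⟩ | ⟨rfl, rfl⟩⟩ <;>
      simp only [GridAdj, Grid3Adj] at this h ⊢ <;> omega
  · rintro ⟨x, j⟩ ⟨hx1, hxm, hj1, hjo⟩
    have := snake_mem_rectV hn hj1 hjo
    simp only [mem_rectV] at this
    simp only [mem_rect3V]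
    omega

theorem isGrid3Cycle_map_swap {m n o : ℤ} {l : List (ℤ × ℤ × ℤ)}
    (hl : IsGrid3Cycle (Rect3V n m o) l) :
    IsGrid3Cycle (Rect3V m n o) (l.map fun v => (v.2.1, v.1, v.2.2)) :=
  IsListCycle.map (R := Grid3Adj) _ hl
    (fun a _ b _ h => by simp only [Prod.mk.injEq] at h; ext <;> simp [h])
    (fun a b h => by simp only [Grid3Adj] at h ⊢; omega)
    (fun v hv => by simp only [mem_rect3V] at hv ⊢; omega)

theorem exists_isGrid3Cycle {m n o : ℤ} {k : ℕ} (hm : 1 < m) (hno : 1 < n ∨ 1 < o) (hk : Even k)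
    (hk4 : 4 ≤ k) (hkmno : (k : ℤ) ≤ m * n * o) :
    ∃ l, IsGrid3Cycle (Rect3V m n o) l ∧ l.length = k := by
  have hno0 : 0 < n * o := pos_of_mul_pos_right (a := m) (by rw [← mul_assoc]; omega) (by omega)
  have hn : 0 < n := by
    rcases hno with h | h
    · omega
    · exact pos_of_mul_pos_left hno0 (by omega)
  have ho : 0 < o := pos_of_mul_pos_right hno0 hn.le
  obtain ⟨l, hl, rfl⟩ := exists_isGridCycle_rectV (M := m) (N := n * o) (by omega)
    (by rcases hno with h | h <;> nlinarith) hk hk4 (by rwa [← mul_assoc])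
  exact ⟨_, isGrid3Cycle_map_snake hn hl, List.length_map _⟩

def coordSum (v : ℤ × ℤ × ℤ) : ℤ := v.1 + v.2.1 + v.2.2

theorem Grid3Adj.coordSum_eq {a b : ℤ × ℤ × ℤ} (h : Grid3Adj a b) :
    coordSum b = coordSum a + 1 ∨ coordSum a = coordSum b + 1 := by
  simp only [Grid3Adj, coordSum] at *
  omega

theorem IsGrid3Cycle.even_length {V : Set (ℤ × ℤ × ℤ)} {l : List (ℤ × ℤ × ℤ)}
    (hl : IsGrid3Cycle V l) : Even l.length :=
  even_length_of_isChain_append_take_one coordSum (fun _ _ h => h.coordSum_eq) hl.2.2.2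

theorem IsGrid3Cycle.length_le {m n o : ℤ} {l : List (ℤ × ℤ × ℤ)}
    (hl : IsGrid3Cycle (Rect3V m n o) l) : (l.length : ℤ) ≤ m * n * o := by
  have hV : ∀ v ∈ l, v ∈ Finset.Icc (1, 1, 1) (m, n, o) := fun v hv => by
    have := hl.2.1 v hv
    simp only [mem_rect3V] at this
    simp only [Finset.mem_Icc, Prod.le_def]
    omega
  obtain ⟨v, hv⟩ := List.exists_mem_of_length_pos (l := l) (by have := hl.1; omega)
  have hv' := hl.2.1 v hv
  simp only [mem_rect3V] at hv'
  have := (hl.2.2.1.subperm fun v hv => Finset.mem_toList.2 (hV v hv)).length_le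
  rw [Finset.length_toList, Finset.card_Icc_prod, Finset.card_Icc_prod] at this
  simp only [Int.card_Icc] at this
  zify at this
  rw [Int.toNat_of_nonneg (by omega), Int.toNat_of_nonneg (by omega),
    Int.toNat_of_nonneg (by omega)] at this
  linarith

theorem IsGrid3Cycle.one_lt_two_dims {m n o : ℤ} {l : List (ℤ × ℤ × ℤ)}
    (hl : IsGrid3Cycle (Rect3V m n o) l) :
    (1 < m ∧ 1 < n) ∨ (1 < m ∧ 1 < o) ∨ (1 < n ∧ 1 < o) := by
  by_contra h
  refine not_isListCycle_of_injOn coordSum (fun a b hab => Grid3Adj.coordSum_eq hab)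
    (fun a ha b hb hab => ?_) hl
  simp only [mem_rect3V, coordSum] at ha hb hab
  ext <;> omega


/-- The 3D grid graph `R(m,n,o)` has a cycle with exactly `k`
vertices iff at least two of `m, n, o` are greater than 1, `k` is even and
`4 ≤ k ≤ m·n·o`. -/
theorem cycle_of_length_k_in_3d (m n o : ℤ) (k : ℕ) :
    (∃ l : List (ℤ × ℤ × ℤ), IsGrid3Cycle (Rect3V m n o) l ∧ l.length = k) ↔
      (((1 < m ∧ 1 < n) ∨ (1 < m ∧ 1 < o) ∨ (1 < n ∧ 1 < o)) ∧
        Even k ∧ 4 ≤ k ∧ (k : ℤ) ≤ m * n * o) := by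
  constructor
  · rintro ⟨l, hl, rfl⟩
    obtain ⟨j, hj⟩ := hl.even_length
    exact ⟨hl.one_lt_two_dims, ⟨j, hj⟩, by have := hl.1; omega, hl.length_le⟩
  · rintro ⟨hdims, hk, hk4, hkmno⟩
    rcases hdims with ⟨hm, hn⟩ | ⟨hm, ho⟩ | ⟨hn, ho⟩
    · exact exists_isGrid3Cycle hm (.inl hn) hk hk4 hkmno
    · exact exists_isGrid3Cycle hm (.inr ho) hk hk4 hkmno
    · obtain ⟨l, hl, rfl⟩ := exists_isGrid3Cycle (m := n) (n := m) hn (.inr ho) hk hk4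
        (by linarith [mul_comm m n])
      exact ⟨_, isGrid3Cycle_map_swap hl, List.length_map _⟩
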